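/- Let ≿ be the α-maxmin expected utility preference on 𝓕 represented by f ↦ α min_{p∈P₁} ∫ u(f) dp + (1−α) max_{p∈P₂} ∫ u(f) dp, where u : X → ℝ is nonconstant affine with 0 in the interior of u(X), P₁, P₂ ⊆ Δ are nonempty, convex and weak*-compact, and α ∈ [0,1]. Then its maximal family of prior sets satisfies 𝒫* = {P ⊆ Δ : P nonempty, convex and weak*-compact, and αP₁ ⊆ P − (1−α)P₂}, where P − (1−α)P₂ and αP₁ denote Minkowski operations. -/

import Mathlib

open scoped Pointwise
open MeasureTheory

namespace Paper

variable {S V : Type*}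

/-- An algebra of subsets of `S` (the events `Σ`). -/
structure IsSetAlg (𝓐 : Set (Set S)) : Prop where
  empty_mem : ∅ ∈ 𝓐
  compl_mem : ∀ A ∈ 𝓐, Aᶜ ∈ 𝓐
  union_mem : ∀ A ∈ 𝓐, ∀ B ∈ 𝓐, A ∪ B ∈ 𝓐

/-- `B₀(Σ)`: real-valued `Σ`-measurable simple functions. -/
def IsSimpleFn (𝓐 : Set (Set S)) (φ : S → ℝ) : Prop :=
  (Set.range φ).Finite ∧ ∀ t : ℝ, φ ⁻¹' {t} ∈ 𝓐

open Classical in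
/-- The integral of a simple function with respect to a finitely additive set function. -/
noncomputable def fint (p : Set S → ℝ) (φ : S → ℝ) : ℝ :=
  if h : (Set.range φ).Finite then ∑ t ∈ h.toFinset, t * p (φ ⁻¹' {t}) else 0

/-- `Δ`: the finitely additive probabilities on `Σ` (canonically extended by `0` off `Σ`). -/
def Δset (𝓐 : Set (Set S)) : Set (Set S → ℝ) :=
  {p | p Set.univ = 1 ∧ (∀ A ∈ 𝓐, 0 ≤ p A) ∧
    (∀ A ∈ 𝓐, ∀ B ∈ 𝓐, Disjoint A B → p (A ∪ B) = p A + p B) ∧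
    ∀ A : Set S, A ∉ 𝓐 → p A = 0}

/-- The weak* topology `σ(Δ, B₀(Σ))`, i.e. the topology induced by the evaluation maps
`p ↦ ∫ φ dp`, `φ ∈ B₀(Σ)`. -/
noncomputable def weakStar (𝓐 : Set (Set S)) : TopologicalSpace (Set S → ℝ) :=
  TopologicalSpace.induced
    (fun p => fun φ : {φ : S → ℝ // IsSimpleFn 𝓐 φ} => fint p φ.1)
    Pi.topologicalSpace

/-- `𝒞`: the weak*-lower semicontinuous convex functions `c : Δ → (-∞, ∞]`. -/
def Cscr (𝓐 : Set (Set S)) : Set ((Set S → ℝ) → EReal) :=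
  {c | (∀ p ∈ Δset 𝓐, ⊥ < c p) ∧
    (@LowerSemicontinuousOn (Set S → ℝ) EReal (weakStar 𝓐) _ c (Δset 𝓐)) ∧
    ∀ p ∈ Δset 𝓐, ∀ q ∈ Δset 𝓐, ∀ a b : ℝ, 0 ≤ a → 0 ≤ b → a + b = 1 →
      c (a • p + b • q) ≤ (a : EReal) * c p + (b : EReal) * c q}

/-- A subset `C ⊆ 𝒞` is grounded if `sup_{c ∈ C} min_{p ∈ Δ} c p = 0`. -/
def Grounded (𝓐 : Set (Set S)) (C : Set ((Set S → ℝ) → EReal)) : Prop :=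
  (⨆ c ∈ C, ⨅ p ∈ Δset 𝓐, c p) = 0

/-- `min_{p ∈ Δ} (∫ φ dp + c p)`. -/
noncomputable def minVal (𝓐 : Set (Set S)) (c : (Set S → ℝ) → EReal) (φ : S → ℝ) : EReal :=
  ⨅ p ∈ Δset 𝓐, ((fint p φ : EReal) + c p)

/-- `max_{q ∈ Δ} (∫ φ dq - b q)`. -/
noncomputable def maxVal (𝓐 : Set (Set S)) (b : (Set S → ℝ) → EReal) (φ : S → ℝ) : EReal :=
  ⨆ q ∈ Δset 𝓐, ((fint q φ : EReal) - b q)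

/-- `max_{c ∈ C} min_{p ∈ Δ} (∫ φ dp + c p)`. -/
noncomputable def maxminVal (𝓐 : Set (Set S)) (C : Set ((Set S → ℝ) → EReal))
    (φ : S → ℝ) : EReal :=
  ⨆ c ∈ C, minVal 𝓐 c φ

/-- `min_{b ∈ B} max_{q ∈ Δ} (∫ φ dq - b q)`. -/
noncomputable def minmaxVal (𝓐 : Set (Set S)) (B : Set ((Set S → ℝ) → EReal))
    (φ : S → ℝ) : EReal :=
  ⨅ b ∈ B, maxVal 𝓐 b φ

/-- `min_{p ∈ P} ∫ φ dp`. -/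
noncomputable def minPVal (P : Set (Set S → ℝ)) (φ : S → ℝ) : EReal :=
  ⨅ p ∈ P, (fint p φ : EReal)

/-- `max_{q ∈ Q} ∫ φ dq`. -/
noncomputable def maxQVal (Q : Set (Set S → ℝ)) (φ : S → ℝ) : EReal :=
  ⨆ q ∈ Q, (fint q φ : EReal)

/-- `max_{P ∈ Pfam} min_{p ∈ P} ∫ φ dp`. -/
noncomputable def maxminPVal (Pfam : Set (Set (Set S → ℝ))) (φ : S → ℝ) : EReal :=
  ⨆ P ∈ Pfam, minPVal P φ

/-- `min_{Q ∈ Qfam} max_{q ∈ Q} ∫ φ dq`. -/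
noncomputable def minmaxQVal (Qfam : Set (Set (Set S → ℝ))) (φ : S → ℝ) : EReal :=
  ⨅ Q ∈ Qfam, maxQVal Q φ

open Classical in
/-- The convex-analytic indicator `δ_P` of a set `P`. -/
noncomputable def ind (P : Set (Set S → ℝ)) : (Set S → ℝ) → EReal :=
  fun p => if p ∈ P then (0 : EReal) else ⊤

variable [AddCommGroup V] [Module ℝ V]

/-- `𝓕`: the simple acts, i.e. `Σ`-measurable maps `f : S → X` with finitely many values. -/
def Acts (𝓐 : Set (Set S)) (X : Set V) : Set (S → V) :=
  {f | (∀ s, f s ∈ X) ∧ (Set.range f).Finite ∧ ∀ v : V, f ⁻¹' {v} ∈ 𝓐}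

/-- The constant act with value `x`. -/
def constAct (x : V) : S → V := fun _ : S => x

/-- The mixture `α f + (1 - α) g` of two acts, defined statewise. -/
def mix (α : ℝ) (f g : S → V) : S → V := fun s => α • f s + (1 - α) • g s

/-- The statewise utility `u ∘ f` of an act. -/
def uAct (u : V → ℝ) (f : S → V) : S → ℝ := fun s => u (f s)

/-- `u : X → ℝ` is nonconstant and affine on `X`. -/
def IsNonconstAffine (X : Set V) (u : V → ℝ) : Prop :=
  (∀ x ∈ X, ∀ y ∈ X, ∀ t ∈ Set.Icc (0 : ℝ) 1,
      u (t • x + (1 - t) • y) = t * u x + (1 - t) * u y) ∧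
  ∃ x ∈ X, ∃ y ∈ X, u x ≠ u y

/-- A niveloidal preference: Axioms A1 (weak order), A2 (monotonicity), A3 (Archimedean)
and A4 (weak C-independence). -/
structure NiveloidalPref (𝓐 : Set (Set S)) (X : Set V)
    (R : (S → V) → (S → V) → Prop) : Prop where
  nontrivial : ∃ f ∈ Acts 𝓐 X, ∃ g ∈ Acts 𝓐 X, R f g ∧ ¬ R g f
  complete : ∀ f ∈ Acts 𝓐 X, ∀ g ∈ Acts 𝓐 X, R f g ∨ R g f
  transitive : ∀ f ∈ Acts 𝓐 X, ∀ g ∈ Acts 𝓐 X, ∀ h ∈ Acts 𝓐 X, R f g → R g h → R f h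
  monotone : ∀ f ∈ Acts 𝓐 X, ∀ g ∈ Acts 𝓐 X,
    (∀ s : S, R (constAct (f s)) (constAct (g s))) → R f g
  archimedean : ∀ f ∈ Acts 𝓐 X, ∀ g ∈ Acts 𝓐 X, ∀ h ∈ Acts 𝓐 X,
    (R f g ∧ ¬ R g f) → (R g h ∧ ¬ R h g) →
    ∃ α ∈ Set.Ioo (0 : ℝ) 1, ∃ β ∈ Set.Ioo (0 : ℝ) 1,
      (R (mix α f h) g ∧ ¬ R g (mix α f h)) ∧
      (R g (mix β f h) ∧ ¬ R (mix β f h) g)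
  weakCIndep : ∀ f ∈ Acts 𝓐 X, ∀ g ∈ Acts 𝓐 X, ∀ x ∈ X, ∀ y ∈ X,
    ∀ α ∈ Set.Ioo (0 : ℝ) 1,
    R (mix α f (constAct x)) (mix α g (constAct x)) →
    R (mix α f (constAct y)) (mix α g (constAct y))

/-- An invariant biseparable preference: Axioms A1 (weak order), A2 (monotonicity),
A3 (Archimedean) and A7 (C-independence). -/
structure IBPref (𝓐 : Set (Set S)) (X : Set V)
    (R : (S → V) → (S → V) → Prop) : Prop where
  nontrivial : ∃ f ∈ Acts 𝓐 X, ∃ g ∈ Acts 𝓐 X, R f g ∧ ¬ R g f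
  complete : ∀ f ∈ Acts 𝓐 X, ∀ g ∈ Acts 𝓐 X, R f g ∨ R g f
  transitive : ∀ f ∈ Acts 𝓐 X, ∀ g ∈ Acts 𝓐 X, ∀ h ∈ Acts 𝓐 X, R f g → R g h → R f h
  monotone : ∀ f ∈ Acts 𝓐 X, ∀ g ∈ Acts 𝓐 X,
    (∀ s : S, R (constAct (f s)) (constAct (g s))) → R f g
  archimedean : ∀ f ∈ Acts 𝓐 X, ∀ g ∈ Acts 𝓐 X, ∀ h ∈ Acts 𝓐 X,
    (R f g ∧ ¬ R g f) → (R g h ∧ ¬ R h g) →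
    ∃ α ∈ Set.Ioo (0 : ℝ) 1, ∃ β ∈ Set.Ioo (0 : ℝ) 1,
      (R (mix α f h) g ∧ ¬ R g (mix α f h)) ∧
      (R g (mix β f h) ∧ ¬ R (mix β f h) g)
  cIndep : ∀ f ∈ Acts 𝓐 X, ∀ g ∈ Acts 𝓐 X, ∀ x ∈ X, ∀ α ∈ Set.Ioo (0 : ℝ) 1,
    (R f g ↔ R (mix α f (constAct x)) (mix α g (constAct x)))

/-- Axiom A5 (uncertainty aversion). -/
def UncertaintyAverse (𝓐 : Set (Set S)) (X : Set V)
    (R : (S → V) → (S → V) → Prop) : Prop :=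
  ∀ f ∈ Acts 𝓐 X, ∀ g ∈ Acts 𝓐 X, ∀ α ∈ Set.Ioo (0 : ℝ) 1,
    R f g → R g f → R (mix α f g) f

/-- `xf` assigns to every act a certainty equivalent. -/
def IsCE (𝓐 : Set (Set S)) (X : Set V) (R : (S → V) → (S → V) → Prop)
    (xf : (S → V) → V) : Prop :=
  ∀ f ∈ Acts 𝓐 X, xf f ∈ X ∧ R f (constAct (xf f)) ∧ R (constAct (xf f)) f

/-- `C*`: the maximal candidate set of penalty functions. -/
def CstarOf (𝓐 : Set (Set S)) (X : Set V) (u : V → ℝ) (xf : (S → V) → V) :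
    Set ((Set S → ℝ) → EReal) :=
  {c | c ∈ Cscr 𝓐 ∧ ∀ f ∈ Acts 𝓐 X, minVal 𝓐 c (uAct u f) ≤ (u (xf f) : EReal)}

/-- `B*`: the maximal candidate set of reward functions. -/
def BstarOf (𝓐 : Set (Set S)) (X : Set V) (u : V → ℝ) (xf : (S → V) → V) :
    Set ((Set S → ℝ) → EReal) :=
  {b | b ∈ Cscr 𝓐 ∧ ∀ f ∈ Acts 𝓐 X, (u (xf f) : EReal) ≤ maxVal 𝓐 b (uAct u f)}

/-- `Pfam*`: the maximal family of prior sets (maxmin form). -/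
def PstarOf (𝓐 : Set (Set S)) (X : Set V) (u : V → ℝ) (xf : (S → V) → V) :
    Set (Set (Set S → ℝ)) :=
  {P | P ⊆ Δset 𝓐 ∧ P.Nonempty ∧ Convex ℝ P ∧ (@IsCompact _ (weakStar 𝓐) P) ∧
    ∀ f ∈ Acts 𝓐 X, minPVal P (uAct u f) ≤ (u (xf f) : EReal)}

/-- `Qfam*`: the maximal family of prior sets (minmax form). -/
def QstarOf (𝓐 : Set (Set S)) (X : Set V) (u : V → ℝ) (xf : (S → V) → V) :
    Set (Set (Set S → ℝ)) :=
  {Q | Q ⊆ Δset 𝓐 ∧ Q.Nonempty ∧ Convex ℝ Q ∧ (@IsCompact _ (weakStar 𝓐) Q) ∧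
    ∀ f ∈ Acts 𝓐 X, (u (xf f) : EReal) ≤ maxQVal Q (uAct u f)}

/-- `C` yields the maxmin representation of `R` with utility `u`. -/
def MaxminRep (𝓐 : Set (Set S)) (X : Set V) (R : (S → V) → (S → V) → Prop)
    (u : V → ℝ) (C : Set ((Set S → ℝ) → EReal)) : Prop :=
  ∀ f ∈ Acts 𝓐 X, ∀ g ∈ Acts 𝓐 X,
    (R f g ↔ maxminVal 𝓐 C (uAct u g) ≤ maxminVal 𝓐 C (uAct u f))

/-- All indicated maxima over `C` and minima over `Δ` are attained. -/
def MaxminAttained (𝓐 : Set (Set S)) (X : Set V) (u : V → ℝ)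
    (C : Set ((Set S → ℝ) → EReal)) : Prop :=
  ∀ f ∈ Acts 𝓐 X,
    (∀ c ∈ C, ∃ p ∈ Δset 𝓐,
      minVal 𝓐 c (uAct u f) = (fint p (uAct u f) : EReal) + c p) ∧
    ∃ c ∈ C, maxminVal 𝓐 C (uAct u f) = minVal 𝓐 c (uAct u f)

/-- `B` yields the minmax representation of `R` with utility `u`. -/
def MinmaxRep (𝓐 : Set (Set S)) (X : Set V) (R : (S → V) → (S → V) → Prop)
    (u : V → ℝ) (B : Set ((Set S → ℝ) → EReal)) : Prop :=
  ∀ f ∈ Acts 𝓐 X, ∀ g ∈ Acts 𝓐 X,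
    (R f g ↔ minmaxVal 𝓐 B (uAct u g) ≤ minmaxVal 𝓐 B (uAct u f))

/-- All indicated minima over `B` and maxima over `Δ` are attained. -/
def MinmaxAttained (𝓐 : Set (Set S)) (X : Set V) (u : V → ℝ)
    (B : Set ((Set S → ℝ) → EReal)) : Prop :=
  ∀ f ∈ Acts 𝓐 X,
    (∀ b ∈ B, ∃ q ∈ Δset 𝓐,
      maxVal 𝓐 b (uAct u f) = (fint q (uAct u f) : EReal) - b q) ∧
    ∃ b ∈ B, minmaxVal 𝓐 B (uAct u f) = maxVal 𝓐 b (uAct u f)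

/-- A family of nonempty, convex, weak*-compact subsets of `Δ`. -/
def IsPriorFamily (𝓐 : Set (Set S)) (Pfam : Set (Set (Set S → ℝ))) : Prop :=
  Pfam.Nonempty ∧ ∀ P ∈ Pfam,
    P ⊆ Δset 𝓐 ∧ P.Nonempty ∧ Convex ℝ P ∧ (@IsCompact _ (weakStar 𝓐) P)

/-- `Pfam` yields the maxmin representation of `R` with utility `u`. -/
def PRep (𝓐 : Set (Set S)) (X : Set V) (R : (S → V) → (S → V) → Prop)
    (u : V → ℝ) (Pfam : Set (Set (Set S → ℝ))) : Prop :=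
  ∀ f ∈ Acts 𝓐 X, ∀ g ∈ Acts 𝓐 X,
    (R f g ↔ maxminPVal Pfam (uAct u g) ≤ maxminPVal Pfam (uAct u f))

/-- All indicated maxima over `Pfam` and minima over `P` are attained. -/
def PAttained (𝓐 : Set (Set S)) (X : Set V) (u : V → ℝ)
    (Pfam : Set (Set (Set S → ℝ))) : Prop :=
  ∀ f ∈ Acts 𝓐 X,
    (∀ P ∈ Pfam, ∃ p ∈ P, minPVal P (uAct u f) = (fint p (uAct u f) : EReal)) ∧
    ∃ P ∈ Pfam, maxminPVal Pfam (uAct u f) = minPVal P (uAct u f)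

/-- `Qfam` yields the minmax representation of `R` with utility `u`. -/
def QRep (𝓐 : Set (Set S)) (X : Set V) (R : (S → V) → (S → V) → Prop)
    (u : V → ℝ) (Qfam : Set (Set (Set S → ℝ))) : Prop :=
  ∀ f ∈ Acts 𝓐 X, ∀ g ∈ Acts 𝓐 X,
    (R f g ↔ minmaxQVal Qfam (uAct u g) ≤ minmaxQVal Qfam (uAct u f))

/-- All indicated minima over `Qfam` and maxima over `Q` are attained. -/
def QAttained (𝓐 : Set (Set S)) (X : Set V) (u : V → ℝ)
    (Qfam : Set (Set (Set S → ℝ))) : Prop :=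
  ∀ f ∈ Acts 𝓐 X,
    (∀ Q ∈ Qfam, ∃ q ∈ Q, maxQVal Q (uAct u f) = (fint q (uAct u f) : EReal)) ∧
    ∃ Q ∈ Qfam, minmaxQVal Qfam (uAct u f) = maxQVal Q (uAct u f)

/-- `c₁ ≈_u c₂`: `c₁` and `c₂` induce the same variational functional on `B₀(Σ, u(X))`. -/
def ApproxEq (𝓐 : Set (Set S)) (X : Set V) (u : V → ℝ)
    (c₁ c₂ : (Set S → ℝ) → EReal) : Prop :=
  ∀ φ : S → ℝ, IsSimpleFn 𝓐 φ → (∀ s, φ s ∈ u '' X) →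
    minVal 𝓐 c₁ φ = minVal 𝓐 c₂ φ

/-- `R₁` is more ambiguity averse than `R₂`. -/
def MoreAmbiguityAverse (𝓐 : Set (Set S)) (X : Set V)
    (R₁ R₂ : (S → V) → (S → V) → Prop) : Prop :=
  ∀ f ∈ Acts 𝓐 X, ∀ x ∈ X, R₂ (constAct x) f → R₁ (constAct x) f

/-- `u₁` and `u₂` are positive affine transformations of each other on `X`. -/
def CardEquiv (X : Set V) (u₁ u₂ : V → ℝ) : Prop :=
  ∃ a b : ℝ, 0 < a ∧ ∀ x ∈ X, u₂ x = a * u₁ x + b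

/-- A capacity on `(S, Σ)`. -/
def IsCapacity (𝓐 : Set (Set S)) (π : Set S → ℝ) : Prop :=
  π ∅ = 0 ∧ π Set.univ = 1 ∧ ∀ A ∈ 𝓐, ∀ B ∈ 𝓐, A ⊆ B → π A ≤ π B

/-- The Choquet integral of a (simple) function against a capacity. -/
noncomputable def choquet (π : Set S → ℝ) (φ : S → ℝ) : ℝ :=
  (∫ t in Set.Ioi (0 : ℝ), π {s | t ≤ φ s}) +
    ∫ t in Set.Iio (0 : ℝ), (π {s | t ≤ φ s} - 1)

/-!
Write `V(φ) = α min_{P₁} ∫ φ + (1 - α) max_{P₂} ∫ φ`. The representation and the certainty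
equivalents give `u(x_f) = V(u(f))`, so `P ∈ 𝒫*` iff `min_P ∫ φ ≤ V(φ)` for every `φ = u(f)`; as
`0` is interior to `u(X)` and both sides are positively homogeneous, this is the same as asking it
for every simple `φ`. If `αP₁ ⊆ P - (1 - α)P₂`, every `α p₁ + (1 - α) q` with `q ∈ P₂` lies in `P`,
which gives the inequality. Conversely, if `α p₁ ∉ P - (1 - α)P₂`, the sets `P` and
`α p₁ + (1 - α)P₂` are disjoint compact convex subsets of `Δ`. Hahn–Banach in `ℝ^{B₀(Σ)}`, where
`Δ` embeds by `p ↦ (φ ↦ ∫ φ dp)`, separates them by a functional depending on finitely many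
coordinates, i.e. by integration against one simple `φ`, and this `φ` violates the inequality.
-/

/-- `IsSimpleFn 𝓐` is the case `β = ℝ`, definitionally. -/
def IsSimpleMap (𝓐 : Set (Set S)) {β : Type*} (χ : S → β) : Prop :=
  (Set.range χ).Finite ∧ ∀ w, χ ⁻¹' {w} ∈ 𝓐

section SetAlgebra

variable {𝓐 : Set (Set S)}

theorem IsSetAlg.univ_mem (hA : IsSetAlg 𝓐) : Set.univ ∈ 𝓐 := by
  simpa using hA.compl_mem ∅ hA.empty_mem

theorem IsSetAlg.biUnion_mem (hA : IsSetAlg 𝓐) {ι : Type*} (F : Finset ι) {B : ι → Set S}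
    (hB : ∀ i ∈ F, B i ∈ 𝓐) : (⋃ i ∈ F, B i) ∈ 𝓐 := by
  classical
  induction F using Finset.induction_on with
  | empty => simpa using hA.empty_mem
  | insert a F _ ih =>
    rw [Finset.set_biUnion_insert]
    exact hA.union_mem _ (hB a (F.mem_insert_self a)) _
      (ih fun i hi => hB i (Finset.mem_insert_of_mem hi))

theorem IsSetAlg.iInter_mem (hA : IsSetAlg 𝓐) {ι : Type*} [Fintype ι] {B : ι → Set S}
    (hB : ∀ i, B i ∈ 𝓐) : (⋂ i, B i) ∈ 𝓐 := by
  rw [← compl_compl (⋂ i, B i), Set.compl_iInter]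
  refine hA.compl_mem _ ?_
  simpa using hA.biUnion_mem Finset.univ fun i _ => hA.compl_mem _ (hB i)

theorem Δset.apply_empty (hA : IsSetAlg 𝓐) {p : Set S → ℝ} (hp : p ∈ Δset 𝓐) : p ∅ = 0 := by
  have h := hp.2.2.1 ∅ hA.empty_mem Set.univ hA.univ_mem (Set.empty_disjoint _)
  rw [Set.empty_union] at h
  linarith

theorem Δset.apply_biUnion (hA : IsSetAlg 𝓐) {p : Set S → ℝ} (hp : p ∈ Δset 𝓐) {ι : Type*}
    (F : Finset ι) {B : ι → Set S} (hB : ∀ i ∈ F, B i ∈ 𝓐)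
    (hd : (F : Set ι).PairwiseDisjoint B) :
    p (⋃ i ∈ F, B i) = ∑ i ∈ F, p (B i) := by
  classical
  induction F using Finset.induction_on with
  | empty => simpa using Δset.apply_empty hA hp
  | insert a F ha ih =>
    rw [Finset.coe_insert, Set.pairwiseDisjoint_insert_of_notMem (by simpa using ha)] at hd
    rw [Finset.set_biUnion_insert, Finset.sum_insert ha,
      hp.2.2.1 _ (hB a (F.mem_insert_self a)) _
        (hA.biUnion_mem F fun i hi => hB i (Finset.mem_insert_of_mem hi))
        (Set.disjoint_iUnion₂_right.2 fun i hi => hd.2 i hi),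
      ih (fun i hi => hB i (Finset.mem_insert_of_mem hi)) hd.1]

theorem convex_Δset : Convex ℝ (Δset 𝓐) := by
  rintro p ⟨hp1, hp0, hpa, hpn⟩ q ⟨hq1, hq0, hqa, hqn⟩ a b ha hb hab
  refine ⟨?_, fun A hA => ?_, fun A hA B hB hAB => ?_, fun A hA => ?_⟩ <;>
    simp only [Pi.add_apply, Pi.smul_apply, smul_eq_mul]
  · rw [hp1, hq1]; linarith
  · have := hp0 A hA; have := hq0 A hA; positivity
  · rw [hpa A hA B hB hAB, hqa A hA B hB hAB]; ring
  · rw [hpn A hA, hqn A hA]; ring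

end SetAlgebra

section SimpleIntegral

variable {𝓐 : Set (Set S)}

theorem IsSimpleMap.comp (hA : IsSetAlg 𝓐) {β γ : Type*} {χ : S → β} (hχ : IsSimpleMap 𝓐 χ)
    (g : β → γ) : IsSimpleMap 𝓐 (fun s => g (χ s)) := by
  classical
  refine ⟨(hχ.1.image g).subset (Set.range_comp g χ).subset, fun c => ?_⟩
  have : (fun s => g (χ s)) ⁻¹' {c} = ⋃ w ∈ hχ.1.toFinset.filter (g · = c), χ ⁻¹' {w} := by
    ext s; simp
  rw [this]
  exact hA.biUnion_mem _ fun w _ => hχ.2 w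

theorem isSimpleMap_pi (hA : IsSetAlg 𝓐) {ι β : Type*} [Fintype ι] {φ : ι → S → β}
    (hφ : ∀ i, IsSimpleMap 𝓐 (φ i)) : IsSimpleMap 𝓐 (fun s i => φ i s) := by
  refine ⟨(Set.Finite.pi fun i => (hφ i).1).subset ?_, fun w => ?_⟩
  · rintro _ ⟨s, rfl⟩ i -
    exact ⟨s, rfl⟩
  · have : (fun s i => φ i s) ⁻¹' {w} = ⋂ i, φ i ⁻¹' {w i} := by
      ext s; simp [funext_iff]
    rw [this]
    exact hA.iInter_mem fun i => (hφ i).2 (w i)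

theorem fint_add_measure (p q : Set S → ℝ) (φ : S → ℝ) :
    fint (p + q) φ = fint p φ + fint q φ := by
  unfold fint
  split_ifs
  · simp only [Pi.add_apply, mul_add, Finset.sum_add_distrib]
  · ring

theorem fint_smul_measure (a : ℝ) (p : Set S → ℝ) (φ : S → ℝ) :
    fint (a • p) φ = a * fint p φ := by
  unfold fint
  split_ifs
  · simp only [Pi.smul_apply, smul_eq_mul, Finset.mul_sum]
    exact Finset.sum_congr rfl fun _ _ => by ring
  · ring

theorem fint_comp (hA : IsSetAlg 𝓐) {p : Set S → ℝ} (hp : p ∈ Δset 𝓐) {β : Type*}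
    {χ : S → β} (hχ : ∀ w, χ ⁻¹' {w} ∈ 𝓐) (T : Finset β) (hT : ∀ s, χ s ∈ T) (v : β → ℝ) :
    fint p (fun s => v (χ s)) = ∑ w ∈ T, v w * p (χ ⁻¹' {w}) := by
  classical
  have hfin : (Set.range fun s => v (χ s)).Finite :=
    (T.finite_toSet.image v).subset (by rintro _ ⟨s, rfl⟩; exact ⟨χ s, hT s, rfl⟩)
  have hfibre : ∀ t, p ((fun s => v (χ s)) ⁻¹' {t}) = ∑ w ∈ T with v w = t, p (χ ⁻¹' {w}) := by
    intro t
    rw [← Δset.apply_biUnion hA hp _ (fun w _ => hχ w)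
      (fun w _ w' _ hww' => Set.disjoint_left.2 fun s hs hs' => hww' (hs.symm.trans hs'))]
    congr 1
    ext s; simp [hT s]
  rw [fint, dif_pos hfin]
  calc ∑ t ∈ hfin.toFinset, t * p ((fun s => v (χ s)) ⁻¹' {t})
      = ∑ t ∈ hfin.toFinset, ∑ w ∈ T with v w = t, v w * p (χ ⁻¹' {w}) := by
        refine Finset.sum_congr rfl fun t _ => ?_
        rw [hfibre, Finset.mul_sum]
        exact Finset.sum_congr rfl fun w hw => by rw [(Finset.mem_filter.1 hw).2]
    _ = ∑ w ∈ T with v w ∈ hfin.toFinset, v w * p (χ ⁻¹' {w}) :=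
        Finset.sum_fiberwise_eq_sum_filter _ _ _ _
    _ = ∑ w ∈ T, v w * p (χ ⁻¹' {w}) := by
        refine Finset.sum_filter_of_ne fun w _ hw => ?_
        obtain ⟨s, hs⟩ : (χ ⁻¹' {w}).Nonempty := Set.nonempty_iff_ne_empty.2 fun h => hw <| by
          rw [h, Δset.apply_empty hA hp, mul_zero]
        exact hfin.mem_toFinset.2 ⟨s, congrArg v hs⟩

theorem fint_const (hA : IsSetAlg 𝓐) {p : Set S → ℝ} (hp : p ∈ Δset 𝓐) (r : ℝ) :
    fint p (fun _ => r) = r := by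
  rw [fint_comp hA hp (χ := fun _ => ()) (fun _ => by simpa using hA.univ_mem) {()}
    (fun _ => Finset.mem_singleton_self _) fun _ => r]
  simp [hp.1]

theorem fint_mul_const (hA : IsSetAlg 𝓐) {p : Set S → ℝ} (hp : p ∈ Δset 𝓐) {φ : S → ℝ}
    (hφ : IsSimpleFn 𝓐 φ) (c : ℝ) : fint p (fun s => c * φ s) = c * fint p φ := by
  have hT : ∀ s, φ s ∈ hφ.1.toFinset := fun s => hφ.1.mem_toFinset.2 ⟨s, rfl⟩
  rw [fint_comp hA hp hφ.2 _ hT (c * ·), fint_comp hA hp hφ.2 _ hT (fun t => t), Finset.mul_sum]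
  simp_rw [mul_assoc]

theorem isSimpleFn_sum (hA : IsSetAlg 𝓐) {ι : Type*} [Fintype ι] (c : ι → ℝ) {φ : ι → S → ℝ}
    (hφ : ∀ i, IsSimpleFn 𝓐 (φ i)) : IsSimpleFn 𝓐 (fun s => ∑ i, c i * φ i s) :=
  (isSimpleMap_pi hA hφ).comp hA fun w => ∑ i, c i * w i

theorem fint_sum (hA : IsSetAlg 𝓐) {p : Set S → ℝ} (hp : p ∈ Δset 𝓐) {ι : Type*} [Fintype ι]
    (c : ι → ℝ) {φ : ι → S → ℝ} (hφ : ∀ i, IsSimpleFn 𝓐 (φ i)) :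
    fint p (fun s => ∑ i, c i * φ i s) = ∑ i, c i * fint p (φ i) := by
  obtain ⟨hfin, hχ⟩ := isSimpleMap_pi hA hφ
  have hT : ∀ s, (fun i => φ i s) ∈ hfin.toFinset := fun s => hfin.mem_toFinset.2 ⟨s, rfl⟩
  have hcoord : ∀ i, fint p (φ i) = _ := fun i => fint_comp hA hp hχ _ hT fun w => w i
  rw [fint_comp hA hp hχ _ hT fun w => ∑ i, c i * w i]
  simp_rw [hcoord, Finset.mul_sum, Finset.sum_mul, mul_assoc]
  exact Finset.sum_comm

theorem Δset.ext_of_fint_eq (hA : IsSetAlg 𝓐) {p q : Set S → ℝ} (hp : p ∈ Δset 𝓐)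
    (hq : q ∈ Δset 𝓐) (h : ∀ φ, IsSimpleFn 𝓐 φ → fint p φ = fint q φ) : p = q := by
  classical
  funext A
  by_cases hAm : A ∈ 𝓐
  · have hχ : IsSimpleMap 𝓐 (fun s => decide (s ∈ A)) := by
      refine ⟨Set.toFinite _, ?_⟩
      rintro (_ | _)
      · simpa [Set.preimage, Set.compl_def] using hA.compl_mem A hAm
      · simpa [Set.preimage] using hAm
    have hind : ∀ r ∈ Δset 𝓐, fint r (fun s => cond (decide (s ∈ A)) 1 0) = r A := by
      intro r hr
      rw [fint_comp hA hr hχ.2 Finset.univ (fun _ => Finset.mem_univ _) fun b => cond b 1 0]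
      simp [Set.preimage]
    rw [← hind p hp, ← hind q hq]
    exact h _ (hχ.comp hA fun b => cond b 1 0)
  · rw [hp.2.2.2 A hAm, hq.2.2.2 A hAm]

noncomputable def fintL (𝓐 : Set (Set S)) : (Set S → ℝ) →ₗ[ℝ] ({φ // IsSimpleFn 𝓐 φ} → ℝ) where
  toFun p φ := fint p φ.1
  map_add' p q := funext fun φ => fint_add_measure p q φ.1
  map_smul' a p := funext fun φ => fint_smul_measure a p φ.1

theorem continuous_fintL : @Continuous _ _ (weakStar 𝓐) _ (fintL 𝓐) :=
  letI := weakStar 𝓐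
  continuous_induced_dom

theorem continuous_fint {φ : S → ℝ} (hφ : IsSimpleFn 𝓐 φ) :
    @Continuous _ _ (weakStar 𝓐) _ (fint · φ) :=
  letI := weakStar 𝓐
  (continuous_apply (⟨φ, hφ⟩ : {ψ // IsSimpleFn 𝓐 ψ})).comp continuous_fintL

end SimpleIntegral

open Topology in
theorem _root_.ContinuousLinearMap.exists_finset_eq_sum_single {ι : Type*} [DecidableEq ι]
    (L : (ι → ℝ) →L[ℝ] ℝ) : ∃ F : Finset ι, ∀ x, L x = ∑ i ∈ F, L (Pi.single i 1) * x i := by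
  have h0 : L ⁻¹' Set.Ioo (-1) 1 ∈ 𝓝 (0 : ι → ℝ) :=
    L.continuous.continuousAt.preimage_mem_nhds (by simpa using Ioo_mem_nhds (by norm_num) one_pos)
  rw [nhds_pi, Filter.mem_pi] at h0
  obtain ⟨I, hI, t, ht, hsub⟩ := h0
  -- a `y` vanishing on `I` lies, with all its multiples, in the neighbourhood where `|L| < 1`
  have hker : ∀ y : ι → ℝ, (∀ i ∈ I, y i = 0) → L y = 0 := by
    intro y hy
    by_contra hne
    have hmem : (2 / L y) • y ∈ I.pi t := fun i hi => by
      simpa [hy i hi] using mem_of_mem_nhds (ht i)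
    have := hsub hmem
    norm_num [div_mul_cancel₀ 2 hne] at this
  refine ⟨hI.toFinset, fun x => ?_⟩
  have hx := hker (x - ∑ i ∈ hI.toFinset, x i • Pi.single i 1) fun i hi => by
    simp [Finset.sum_apply, Pi.single_apply, hi]
  rw [map_sub, sub_eq_zero, map_sum] at hx
  simp [hx, mul_comm]

theorem exists_simpleFn_separation {𝓐 : Set (Set S)} (hA : IsSetAlg 𝓐) {P K : Set (Set S → ℝ)}
    (hP : P ⊆ Δset 𝓐) (hPc : Convex ℝ P) (hPk : @IsCompact _ (weakStar 𝓐) P)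
    (hK : K ⊆ Δset 𝓐) (hKc : Convex ℝ K) (hKk : @IsCompact _ (weakStar 𝓐) K)
    (hPK : Disjoint P K) :
    ∃ ψ, IsSimpleFn 𝓐 ψ ∧ ∃ s, (∀ k ∈ K, fint k ψ < s) ∧ ∀ x ∈ P, s < fint x ψ := by
  classical
  let _ := weakStar 𝓐
  have hdisj : Disjoint (fintL 𝓐 '' K) (fintL 𝓐 '' P) := by
    refine Set.disjoint_left.2 ?_
    rintro _ ⟨k, hk, rfl⟩ ⟨x, hx, hxk⟩
    refine hPK.ne_of_mem hx hk (Δset.ext_of_fint_eq hA (hP hx) (hK hk) fun φ hφ => ?_)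
    exact congrFun hxk ⟨φ, hφ⟩
  obtain ⟨L, s, t, hLK, hst, hLP⟩ := geometric_hahn_banach_compact_closed
    (hKc.linear_image _) (hKk.image continuous_fintL) (hPc.linear_image _)
    (hPk.image continuous_fintL).isClosed hdisj
  obtain ⟨F, hF⟩ := L.exists_finset_eq_sum_single
  have hψ : ∀ r ∈ Δset 𝓐,
      fint r (fun s => ∑ i : F, L (Pi.single i.1 1) * i.1.1 s) = L (fintL 𝓐 r) := by
    intro r hr
    rw [fint_sum hA hr _ fun i => i.1.2, hF, ← Finset.sum_coe_sort F]
    rfl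
  refine ⟨_, isSimpleFn_sum hA (fun i : F => L (Pi.single i.1 1)) fun i => i.1.2, s,
    fun k hk => ?_, fun x hx => ?_⟩
  · rw [hψ k (hK hk)]
    exact hLK _ ⟨k, hk, rfl⟩
  · rw [hψ x (hP hx)]
    exact hst.trans (hLP _ ⟨x, hx, rfl⟩)

section Priors

variable {𝓐 : Set (Set S)}

theorem minPVal_eq_of_isMinOn {P : Set (Set S → ℝ)} {φ : S → ℝ} {p : Set S → ℝ} (hp : p ∈ P)
    (hmin : IsMinOn (fint · φ) P p) : minPVal P φ = fint p φ :=
  le_antisymm (iInf₂_le p hp) (le_iInf₂ fun _ hq => EReal.coe_le_coe_iff.2 (hmin hq))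

theorem maxQVal_eq_of_isMaxOn {Q : Set (Set S → ℝ)} {φ : S → ℝ} {q : Set S → ℝ} (hq : q ∈ Q)
    (hmax : IsMaxOn (fint · φ) Q q) : maxQVal Q φ = fint q φ :=
  le_antisymm (iSup₂_le fun _ hr => EReal.coe_le_coe_iff.2 (hmax hr))
    (le_iSup₂ (f := fun r (_ : r ∈ Q) => (fint r φ : EReal)) q hq)

theorem exists_isMinOn_fint {P : Set (Set S → ℝ)} (hPk : @IsCompact _ (weakStar 𝓐) P)
    (hPn : P.Nonempty) {φ : S → ℝ} (hφ : IsSimpleFn 𝓐 φ) : ∃ p ∈ P, IsMinOn (fint · φ) P p :=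
  let _ := weakStar 𝓐
  hPk.exists_isMinOn hPn (continuous_fint hφ).continuousOn

theorem exists_isMaxOn_fint {Q : Set (Set S → ℝ)} (hQk : @IsCompact _ (weakStar 𝓐) Q)
    (hQn : Q.Nonempty) {φ : S → ℝ} (hφ : IsSimpleFn 𝓐 φ) : ∃ q ∈ Q, IsMaxOn (fint · φ) Q q :=
  let _ := weakStar 𝓐
  hQk.exists_isMaxOn hQn (continuous_fint hφ).continuousOn

noncomputable def alphaMaxmin (α : ℝ) (P₁ P₂ : Set (Set S → ℝ)) (φ : S → ℝ) : EReal :=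
  (α : EReal) * minPVal P₁ φ + ((1 - α : ℝ) : EReal) * maxQVal P₂ φ

/-- `min_{p ∈ P} ∫ φ dp ≤ α min_{p ∈ P₁} ∫ φ dp + (1 - α) max_{q ∈ P₂} ∫ φ dq`, unfolded into a
statement about individual priors; for compact sets see `minPVal_le_alphaMaxmin_iff`. -/
def MinLeMix (α : ℝ) (P P₁ P₂ : Set (Set S → ℝ)) (φ : S → ℝ) : Prop :=
  ∀ p₁ ∈ P₁, ∃ x ∈ P, ∃ q ∈ P₂, fint x φ ≤ α * fint p₁ φ + (1 - α) * fint q φ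

theorem minPVal_le_alphaMaxmin_iff {P P₁ P₂ : Set (Set S → ℝ)}
    (hPk : @IsCompact _ (weakStar 𝓐) P) (hPn : P.Nonempty)
    (hP₁k : @IsCompact _ (weakStar 𝓐) P₁) (hP₁n : P₁.Nonempty)
    (hP₂k : @IsCompact _ (weakStar 𝓐) P₂) (hP₂n : P₂.Nonempty)
    {α : ℝ} (hα : α ∈ Set.Icc (0 : ℝ) 1) {φ : S → ℝ} (hφ : IsSimpleFn 𝓐 φ) :
    minPVal P φ ≤ alphaMaxmin α P₁ P₂ φ ↔ MinLeMix α P P₁ P₂ φ := by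
  obtain ⟨x, hx, hxmin⟩ := exists_isMinOn_fint hPk hPn hφ
  obtain ⟨m, hm, hmmin⟩ := exists_isMinOn_fint hP₁k hP₁n hφ
  obtain ⟨q, hq, hqmax⟩ := exists_isMaxOn_fint hP₂k hP₂n hφ
  have h1α : 0 ≤ 1 - α := sub_nonneg.2 hα.2
  rw [alphaMaxmin, minPVal_eq_of_isMinOn hx hxmin, minPVal_eq_of_isMinOn hm hmmin,
    maxQVal_eq_of_isMaxOn hq hqmax, ← EReal.coe_mul, ← EReal.coe_mul, ← EReal.coe_add,
    EReal.coe_le_coe_iff]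
  refine ⟨fun h p₁ hp₁ => ⟨x, hx, q, hq, h.trans ?_⟩, fun h => ?_⟩
  · gcongr
    · exact hα.1
    · exact hmmin hp₁
  · obtain ⟨y, hy, r, hr, hyr⟩ := h m hm
    calc fint x φ ≤ fint y φ := hxmin hy
      _ ≤ α * fint m φ + (1 - α) * fint r φ := hyr
      _ ≤ α * fint m φ + (1 - α) * fint q φ := by gcongr; exact hqmax hr

theorem MinLeMix.of_mul (hA : IsSetAlg 𝓐) {P P₁ P₂ : Set (Set S → ℝ)} (hP : P ⊆ Δset 𝓐)
    (hP₁ : P₁ ⊆ Δset 𝓐) (hP₂ : P₂ ⊆ Δset 𝓐) {α lam : ℝ} (hlam : 0 < lam) {φ : S → ℝ}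
    (hφ : IsSimpleFn 𝓐 φ) (h : MinLeMix α P P₁ P₂ fun s => lam * φ s) :
    MinLeMix α P P₁ P₂ φ := by
  intro p₁ hp₁
  obtain ⟨x, hx, q, hq, hle⟩ := h p₁ hp₁
  rw [fint_mul_const hA (hP hx) hφ, fint_mul_const hA (hP₁ hp₁) hφ,
    fint_mul_const hA (hP₂ hq) hφ] at hle
  exact ⟨x, hx, q, hq, le_of_mul_le_mul_left (by linear_combination hle) hlam⟩

theorem smul_subset_sub_smul_iff (hA : IsSetAlg 𝓐) {P P₁ P₂ : Set (Set S → ℝ)}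
    (hP : P ⊆ Δset 𝓐) (hPc : Convex ℝ P) (hPk : @IsCompact _ (weakStar 𝓐) P)
    (hP₁ : P₁ ⊆ Δset 𝓐)
    (hP₂ : P₂ ⊆ Δset 𝓐) (hP₂c : Convex ℝ P₂) (hP₂k : @IsCompact _ (weakStar 𝓐) P₂)
    {α : ℝ} (hα : α ∈ Set.Icc (0 : ℝ) 1) :
    α • P₁ ⊆ P - (1 - α) • P₂ ↔ ∀ φ, IsSimpleFn 𝓐 φ → MinLeMix α P P₁ P₂ φ := by
  have hmix : ∀ p q : Set S → ℝ, ∀ φ, fint (α • p + (1 - α) • q) φ =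
      α * fint p φ + (1 - α) * fint q φ := fun p q φ => by
    rw [fint_add_measure, fint_smul_measure, fint_smul_measure]
  constructor
  · intro hsub φ _ p₁ hp₁
    obtain ⟨x, hx, _, ⟨q, hq, rfl⟩, hxq⟩ := hsub (Set.smul_mem_smul_set hp₁)
    exact ⟨x, hx, q, hq, by rw [eq_add_of_sub_eq hxq, hmix]⟩
  · rintro h _ ⟨p₁, hp₁, rfl⟩
    by_contra hnot
    set K := (fun q => α • p₁ + (1 - α) • q) '' P₂
    have hK : K ⊆ Δset 𝓐 := by
      rintro _ ⟨q, hq, rfl⟩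
      exact convex_Δset (hP₁ hp₁) (hP₂ hq) hα.1 (sub_nonneg.2 hα.2) (by ring)
    have hKk : @IsCompact _ (weakStar 𝓐) K := by
      let _ := weakStar 𝓐
      refine hP₂k.image (continuous_induced_rng.2 (continuous_pi fun φ => ?_))
      simp only [Function.comp_def, hmix]
      exact continuous_const.add (continuous_const.mul (continuous_fint φ.2))
    have hPK : Disjoint P K := by
      refine Set.disjoint_left.2 ?_
      rintro _ hx ⟨q, hq, rfl⟩
      exact hnot ⟨_, hx, _, Set.smul_mem_smul_set hq, add_sub_cancel_right _ _⟩
    obtain ⟨ψ, hψ, s, hKs, hsP⟩ := exists_simpleFn_separation hA hP hPc hPk hK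
      (hP₂c.affinity _ _) hKk hPK
    obtain ⟨x, hx, q, hq, hle⟩ := h ψ hψ p₁ hp₁
    have := hKs _ ⟨q, hq, rfl⟩
    rw [hmix] at this
    linarith [hsP x hx]

end Priors

section Preference

variable {𝓐 : Set (Set S)} {W : Type*} {X : Set W} {R : (S → W) → (S → W) → Prop} {u : W → ℝ}

theorem constAct_mem_acts (hA : IsSetAlg 𝓐) {x : W} (hx : x ∈ X) :
    constAct x ∈ Acts 𝓐 X := by
  classical
  refine ⟨fun _ => hx, (Set.finite_singleton x).subset Set.range_const_subset, fun w => ?_⟩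
  rw [show constAct x = fun _ : S => x from rfl, Set.preimage_const]
  split_ifs
  exacts [hA.univ_mem, hA.empty_mem]

theorem alphaMaxmin_const (hA : IsSetAlg 𝓐) {P₁ P₂ : Set (Set S → ℝ)} (hP₁ : P₁ ⊆ Δset 𝓐)
    (hP₁n : P₁.Nonempty) (hP₂ : P₂ ⊆ Δset 𝓐) (hP₂n : P₂.Nonempty) (α r : ℝ) :
    alphaMaxmin α P₁ P₂ (fun _ => r) = r := by
  obtain ⟨p, hp⟩ := hP₁n
  obtain ⟨q, hq⟩ := hP₂n
  have hP₁r : ∀ p' ∈ P₁, fint p' (fun _ => r) = r := fun p' hp' => fint_const hA (hP₁ hp') r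
  have hP₂r : ∀ q' ∈ P₂, fint q' (fun _ => r) = r := fun q' hq' => fint_const hA (hP₂ hq') r
  rw [alphaMaxmin,
    minPVal_eq_of_isMinOn hp fun p' hp' => by simp [hP₁r p' hp', hP₁r p hp],
    maxQVal_eq_of_isMaxOn hq fun q' hq' => by simp [hP₂r q' hq', hP₂r q hq], hP₁r p hp, hP₂r q hq]
  exact_mod_cast (by ring : α * r + (1 - α) * r = r)

theorem exists_mem_acts_uAct_eq_mul (hA : IsSetAlg 𝓐) (h0 : (0 : ℝ) ∈ interior (u '' X))
    {φ : S → ℝ} (hφ : IsSimpleFn 𝓐 φ) :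
    ∃ lam > 0, ∃ f ∈ Acts 𝓐 X, uAct u f = fun s => lam * φ s := by
  classical
  obtain ⟨y₀, -⟩ := interior_subset h0
  obtain ⟨ε, hε, hball⟩ := Metric.mem_nhds_iff.1 (mem_interior_iff_mem_nhds.1 h0)
  obtain ⟨M, hM⟩ := (hφ.1.image abs).bddAbove
  set lam := ε / (|M| + 1)
  have hlam : 0 < lam := by positivity
  have hmem : ∀ s, lam * φ s ∈ u '' X := fun s => hball <| by
    have hφM : |φ s| ≤ |M| := (hM ⟨φ s, ⟨s, rfl⟩, rfl⟩).trans (le_abs_self M)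
    have : lam * (|M| + 1) = ε := div_mul_cancel₀ _ (by positivity)
    rw [mem_ball_zero_iff, Real.norm_eq_abs, abs_mul, abs_of_pos hlam]
    nlinarith
  let g : ℝ → W := fun t => if h : t ∈ u '' X then h.choose else y₀
  have hg : ∀ s, g (lam * φ s) ∈ X ∧ u (g (lam * φ s)) = lam * φ s := fun s => by
    simpa only [g, dif_pos (hmem s)] using (hmem s).choose_spec
  exact ⟨lam, hlam, fun s => g (lam * φ s),
    ⟨fun s => (hg s).1, IsSimpleMap.comp hA hφ fun t => g (lam * t)⟩, funext fun s => (hg s).2⟩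

theorem alphaMaxmin_uAct_eq (hA : IsSetAlg 𝓐) {P₁ P₂ : Set (Set S → ℝ)} (hP₁ : P₁ ⊆ Δset 𝓐)
    (hP₁n : P₁.Nonempty) (hP₂ : P₂ ⊆ Δset 𝓐) (hP₂n : P₂.Nonempty) {α : ℝ}
    (hrep : ∀ f ∈ Acts 𝓐 X, ∀ g ∈ Acts 𝓐 X,
      R f g → alphaMaxmin α P₁ P₂ (uAct u g) ≤ alphaMaxmin α P₁ P₂ (uAct u f))
    {xf : (S → W) → W} (hxf : IsCE 𝓐 X R xf) {f : S → W} (hf : f ∈ Acts 𝓐 X) :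
    alphaMaxmin α P₁ P₂ (uAct u f) = u (xf f) := by
  obtain ⟨hxX, hfx, hxf⟩ := hxf f hf
  have hx := constAct_mem_acts hA hxX
  rw [← alphaMaxmin_const hA hP₁ hP₁n hP₂ hP₂n α (u (xf f))]
  exact le_antisymm (hrep _ hx f hf hxf) (hrep f hf _ hx hfx)

theorem forall_minPVal_le_iff (hA : IsSetAlg 𝓐) (h0 : (0 : ℝ) ∈ interior (u '' X))
    {P P₁ P₂ : Set (Set S → ℝ)}
    (hP : P ⊆ Δset 𝓐) (hPn : P.Nonempty) (hPk : @IsCompact _ (weakStar 𝓐) P)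
    (hP₁ : P₁ ⊆ Δset 𝓐) (hP₁n : P₁.Nonempty) (hP₁k : @IsCompact _ (weakStar 𝓐) P₁)
    (hP₂ : P₂ ⊆ Δset 𝓐) (hP₂n : P₂.Nonempty) (hP₂k : @IsCompact _ (weakStar 𝓐) P₂)
    {α : ℝ} (hα : α ∈ Set.Icc (0 : ℝ) 1)
    (hrep : ∀ f ∈ Acts 𝓐 X, ∀ g ∈ Acts 𝓐 X,
      R f g → alphaMaxmin α P₁ P₂ (uAct u g) ≤ alphaMaxmin α P₁ P₂ (uAct u f))
    {xf : (S → W) → W} (hxf : IsCE 𝓐 X R xf) :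
    (∀ f ∈ Acts 𝓐 X, minPVal P (uAct u f) ≤ u (xf f)) ↔
      ∀ φ, IsSimpleFn 𝓐 φ → MinLeMix α P P₁ P₂ φ := by
  have hiff : ∀ f ∈ Acts 𝓐 X,
      minPVal P (uAct u f) ≤ u (xf f) ↔ MinLeMix α P P₁ P₂ (uAct u f) := fun f hf => by
    rw [← alphaMaxmin_uAct_eq hA hP₁ hP₁n hP₂ hP₂n hrep hxf hf]
    exact minPVal_le_alphaMaxmin_iff hPk hPn hP₁k hP₁n hP₂k hP₂n hα (IsSimpleMap.comp hA hf.2 u)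
  refine ⟨fun h φ hφ => ?_, fun h f hf => (hiff f hf).2 (h _ (IsSimpleMap.comp hA hf.2 u))⟩
  obtain ⟨lam, hlam, f, hf, hfu⟩ := exists_mem_acts_uAct_eq_mul hA h0 hφ
  have hf' := (hiff f hf).1 (h f hf)
  rw [hfu] at hf'
  exact hf'.of_mul hA hP hP₁ hP₂ hlam hφ

end Preference

theorem stmt13_general {S V : Type*}
    (𝓐 : Set (Set S)) (hA : IsSetAlg 𝓐)
    (X : Set V)
    (R : (S → V) → (S → V) → Prop)
    (u : V → ℝ) (h0 : (0 : ℝ) ∈ interior (u '' X))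
    (P₁ P₂ : Set (Set S → ℝ))
    (hP₁ : P₁ ⊆ Δset 𝓐) (hP₁n : P₁.Nonempty)
    (hP₁k : @IsCompact _ (weakStar 𝓐) P₁)
    (hP₂ : P₂ ⊆ Δset 𝓐) (hP₂n : P₂.Nonempty) (hP₂c : Convex ℝ P₂)
    (hP₂k : @IsCompact _ (weakStar 𝓐) P₂)
    (α : ℝ) (hα : α ∈ Set.Icc (0 : ℝ) 1)
    (hrep : ∀ f ∈ Acts 𝓐 X, ∀ g ∈ Acts 𝓐 X,
      (R f g ↔
        (α : EReal) * minPVal P₁ (uAct u g) +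
          ((1 - α : ℝ) : EReal) * maxQVal P₂ (uAct u g) ≤
        (α : EReal) * minPVal P₁ (uAct u f) +
          ((1 - α : ℝ) : EReal) * maxQVal P₂ (uAct u f)))
    (xf : (S → V) → V) (hxf : IsCE 𝓐 X R xf) :
    PstarOf 𝓐 X u xf =
      {P | P ⊆ Δset 𝓐 ∧ P.Nonempty ∧ Convex ℝ P ∧ (@IsCompact _ (weakStar 𝓐) P) ∧
        α • P₁ ⊆ P - (1 - α) • P₂} :=
  Set.ext fun _ => and_congr_right fun hP => and_congr_right fun hPn =>
    and_congr_right fun hPc => and_congr_right fun hPk =>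
      (forall_minPVal_le_iff hA h0 hP hPn hPk hP₁ hP₁n hP₁k hP₂ hP₂n hP₂k hα
        (fun f hf g hg => (hrep f hf g hg).1) hxf).trans
      (smul_subset_sub_smul_iff hA hP hPc hPk hP₁ hP₂ hP₂c hP₂k hα).symm

theorem stmt13 {S V : Type*} [Nonempty S] [AddCommGroup V] [Module ℝ V]
    (𝓐 : Set (Set S)) (hA : IsSetAlg 𝓐)
    (X : Set V) (hX : X.Nonempty) (hXc : Convex ℝ X)
    (R : (S → V) → (S → V) → Prop) (hpref : IBPref 𝓐 X R)
    (u : V → ℝ) (hu : IsNonconstAffine X u) (h0 : (0 : ℝ) ∈ interior (u '' X))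
    (P₁ P₂ : Set (Set S → ℝ))
    (hP₁ : P₁ ⊆ Δset 𝓐) (hP₁n : P₁.Nonempty) (hP₁c : Convex ℝ P₁)
    (hP₁k : @IsCompact _ (weakStar 𝓐) P₁)
    (hP₂ : P₂ ⊆ Δset 𝓐) (hP₂n : P₂.Nonempty) (hP₂c : Convex ℝ P₂)
    (hP₂k : @IsCompact _ (weakStar 𝓐) P₂)
    (α : ℝ) (hα : α ∈ Set.Icc (0 : ℝ) 1)
    (hrep : ∀ f ∈ Acts 𝓐 X, ∀ g ∈ Acts 𝓐 X,
      (R f g ↔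
        (α : EReal) * minPVal P₁ (uAct u g) +
          ((1 - α : ℝ) : EReal) * maxQVal P₂ (uAct u g) ≤
        (α : EReal) * minPVal P₁ (uAct u f) +
          ((1 - α : ℝ) : EReal) * maxQVal P₂ (uAct u f)))
    (xf : (S → V) → V) (hxf : IsCE 𝓐 X R xf) :
    PstarOf 𝓐 X u xf =
      {P | P ⊆ Δset 𝓐 ∧ P.Nonempty ∧ Convex ℝ P ∧ (@IsCompact _ (weakStar 𝓐) P) ∧
        α • P₁ ⊆ P - (1 - α) • P₂} :=
  stmt13_general 𝓐 hA X R u h0 P₁ P₂ hP₁ hP₁n hP₁k hP₂ hP₂n hP₂c hP₂k α hα hrep xf hxf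

end Paper
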